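/- Let q > 0. For every real z, the expectation of z^{fp(Π)} for a random permutation Π of {1,…,n} distributed according to the fixed point biased measure P_n^q, i.e. the quantity (Σ_{σ∈S_n} (zq)^{fp(σ)}) / (Σ_{σ∈S_n} q^{fp(σ)}), converges to e^{q(z-1)} as n → ∞. -/

import Mathlib

/-!
Expanding `x ^ fp σ = ((x - 1) + 1) ^ fp σ` over subsets of the fixed points and counting, for
each `t`, the `(n - #t)!` permutations fixing `t` pointwise gives
`∑_σ x ^ fp σ = n! ∑_{k ≤ n} (x - 1) ^ k / k!`. The ratio in the theorem is therefore a ratio of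
partial sums of the exponential series at `zq - 1` and `q - 1`, which tends to `e^(zq - q)`.
-/

open Finset Filter

/-- The number of fixed points of a permutation of `{1,…,n}`. -/
def fp {n : ℕ} (σ : Equiv.Perm (Fin n)) : ℕ :=
  (Finset.univ.filter fun i => σ i = i).card

open scoped Nat

namespace Equiv.Perm

variable {α : Type*} [Fintype α] [DecidableEq α]

theorem card_filter_forall_mem_apply_eq (t : Finset α) :
    #{σ : Perm α | ∀ i ∈ t, σ i = i} = (Fintype.card α - #t)! := by
  rw [← Fintype.card_subtype]
  have e : {σ : Perm α // ∀ i ∈ t, σ i = i} ≃ Perm {i // i ∉ t} :=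
    (Equiv.subtypeEquivRight fun σ => by simp only [not_not]).trans
      (Perm.subtypeEquivSubtypePerm _).symm
  rw [Fintype.card_congr e, Fintype.card_perm, Fintype.card_subtype_compl, Fintype.card_coe]

theorem sum_pow_card_fixedPoints {R : Type*} [Field R] [CharZero R] (x : R) :
    ∑ σ : Perm α, x ^ #{i | σ i = i}
      = (Fintype.card α)! * ∑ k ∈ range (Fintype.card α + 1), (x - 1) ^ k / k ! := by
  set n := Fintype.card α
  have binomial (s : Finset α) : x ^ #s = ∑ t ∈ s.powerset, (x - 1) ^ #t := by
    simpa using (sum_pow_mul_eq_add_pow (x - 1) 1 s).symm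
  calc ∑ σ : Perm α, x ^ #{i | σ i = i}
      = ∑ σ : Perm α, ∑ t ∈ univ.powerset, if ∀ i ∈ t, σ i = i then (x - 1) ^ #t else 0 := by
        refine sum_congr rfl fun σ _ => ?_
        rw [binomial, ← sum_filter]
        congr 1
        ext t
        simp [subset_iff]
    _ = ∑ t ∈ univ.powerset, ((n - #t)! : R) * (x - 1) ^ #t := by
        rw [sum_comm]
        refine sum_congr rfl fun t _ => ?_
        rw [← sum_filter, sum_const, card_filter_forall_mem_apply_eq, nsmul_eq_mul]
    _ = ∑ k ∈ range (n + 1), (n.choose k : R) * ((n - k)! * (x - 1) ^ k) := by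
        rw [sum_powerset_apply_card (fun k => ((n - k)! : R) * (x - 1) ^ k), card_univ]
        simp only [nsmul_eq_mul, n]
    _ = n ! * ∑ k ∈ range (n + 1), (x - 1) ^ k / k ! := by
        rw [mul_sum]
        refine sum_congr rfl fun k hk => ?_
        have : ((n - k)! : R) ≠ 0 := Nat.cast_ne_zero.mpr (Nat.factorial_ne_zero _)
        rw [Nat.cast_choose R (Nat.lt_succ_iff.mp (mem_range.mp hk))]
        field_simp

end Equiv.Perm

theorem Real.tendsto_sum_range_succ_pow_div_factorial (x : ℝ) :
    Tendsto (fun n : ℕ => ∑ k ∈ range (n + 1), x ^ k / k !) atTop (nhds (Real.exp x)) := by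
  rw [Real.exp_eq_exp_ℝ]
  exact (NormedSpace.expSeries_div_hasSum_exp x).tendsto_sum_nat.comp (tendsto_add_atTop_nat 1)

theorem fp_biased_pgf_tendsto_general (q : ℝ) (z : ℝ) :
    Tendsto (fun n : ℕ =>
        (∑ σ : Equiv.Perm (Fin n), (z * q) ^ fp σ) /
          ∑ σ : Equiv.Perm (Fin n), q ^ fp σ)
      atTop (nhds (Real.exp (q * (z - 1)))) := by
  have ratio_eq (n : ℕ) :
      (∑ σ : Equiv.Perm (Fin n), (z * q) ^ fp σ) / ∑ σ : Equiv.Perm (Fin n), q ^ fp σ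
        = (∑ k ∈ range (n + 1), (z * q - 1) ^ k / k !) /
            ∑ k ∈ range (n + 1), (q - 1) ^ k / k ! := by
    simp only [fp, Equiv.Perm.sum_pow_card_fixedPoints, Fintype.card_fin]
    exact mul_div_mul_left _ _ (Nat.cast_ne_zero.mpr n.factorial_ne_zero)
  have hexp : Real.exp (z * q - 1) / Real.exp (q - 1) = Real.exp (q * (z - 1)) := by
    rw [← Real.exp_sub]
    ring_nf
  simpa only [ratio_eq, hexp, Pi.div_def] using
    (Real.tendsto_sum_range_succ_pow_div_factorial (z * q - 1)).div
      (Real.tendsto_sum_range_succ_pow_div_factorial (q - 1)) (Real.exp_ne_zero _)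

/-- For `q > 0` and any real `z`, the probability generating function of the number of
fixed points under `P_n^q`, namely `(Σ_{σ∈S_n} (zq)^{fp σ}) / (Σ_{σ∈S_n} q^{fp σ})`,
converges to `e^{q(z-1)}` as `n → ∞`. -/
theorem fp_biased_pgf_tendsto (q : ℝ) (hq : 0 < q) (z : ℝ) :
    Tendsto (fun n : ℕ =>
        (∑ σ : Equiv.Perm (Fin n), (z * q) ^ fp σ) /
          ∑ σ : Equiv.Perm (Fin n), q ^ fp σ)
      atTop (nhds (Real.exp (q * (z - 1)))) :=
  fp_biased_pgf_tendsto_general q z
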